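/- Suppose sequences (y_i^k), (z_i^k) in ℝ^m satisfy y_i^k → y* and z_i^k → y* for each i in a finite set N, and s_i^{k+1} = s_i^k + σ(y_i^k − z_i^k) with σ > 0. If w^k := Σᵢ s_i^k converges to some w*, and for each k, w^{k+1} − (σ/|N|) Σᵢ (z_i^{k+1} − y_i^{k+1}) ∈ (1/|N|) Σᵢ ∂g*(z_i^{k+1}) for a proper closed convex g, then y* ∈ ∂g(w*). -/

import Mathlib

open scoped BigOperators
noncomputable section

abbrev Evec (n : ℕ) := EuclideanSpace ℝ (Fin n)

/-- Convexity for extended-real-valued functions. -/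
def IsConvexFn {n : ℕ} (f : Evec n → EReal) : Prop :=
  ∀ x y : Evec n, ∀ a b : ℝ, 0 ≤ a → 0 ≤ b → a + b = 1 →
    f (a • x + b • y) ≤ (a : EReal) * f x + (b : EReal) * f y

/-- Properness: never `⊥` and finite somewhere. -/
def IsProperFn {n : ℕ} (f : Evec n → EReal) : Prop :=
  (∀ x, f x ≠ ⊥) ∧ ∃ x, f x ≠ ⊤

/-- `f ∈ Γ_n`: proper, closed (lsc) and convex. -/
def InGamma {n : ℕ} (f : Evec n → EReal) : Prop :=
  IsProperFn f ∧ LowerSemicontinuous f ∧ IsConvexFn f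

/-- Convex subdifferential. -/
def subdiff {n : ℕ} (f : Evec n → EReal) (x : Evec n) : Set (Evec n) :=
  {u | ∀ y, f x + ((inner ℝ u (y - x) : ℝ) : EReal) ≤ f y}

/-- Convex (Fenchel) conjugate. -/
def conjFn {n : ℕ} (f : Evec n → EReal) (z : Evec n) : EReal :=
  ⨆ x : Evec n, ((inner ℝ z x : ℝ) : EReal) - f x

open Classical in
def indFn {n : ℕ} (S : Set (Evec n)) (x : Evec n) : EReal :=
  if x ∈ S then 0 else ⊤

/-!
Write `uₖᵢ ∈ ∂g*(zᵢᵏ⁺¹)` for the subgradients in the inclusion. Their averages converge to `w*`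
because `w^k → w*` and the residuals `zᵢᵏ − yᵢᵏ` vanish, so it suffices to show that the graph of
`∂g*` is closed under such averaged limits: then `w* ∈ ∂g*(y*)`, and `y* ∈ ∂g(w*)` follows from
`g ≤ g**` (Fenchel–Moreau, via Hahn–Banach separation of the epigraph).

The individual `uₖᵢ` need not be bounded. Projecting them onto the direction `V` of the affine hull
of `dom g*` does not change them as subgradients. If the projected family were unbounded, its
normalized cluster points `cᵢ ∈ V` would sum to zero and satisfy `⟪cᵢ, v − y*⟫ ≤ 0` on `dom g*`,
hence be orthogonal to `V`, i.e. zero, which is impossible. So a subsequence converges, and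
closedness of the graph of `∂g*` and convexity of `∂g*(y*)` finish the argument.
-/

open Filter Topology

lemma eq_zero_of_sum_eq_zero_of_inner_sub_nonpos {E : Type*} [NormedAddCommGroup E]
    [InnerProductSpace ℝ E] {ι : Type*} [Fintype ι] {D : Set E} {y : E} {c : ι → E}
    (hcD : ∀ i, c i ∈ vectorSpan ℝ D) (hsum : ∑ i, c i = 0)
    (hc : ∀ i, ∀ v ∈ D, inner ℝ (c i) (v - y) ≤ 0) : c = 0 := by
  funext i
  have horth : ∀ v ∈ D, inner ℝ (c i) (v - y) = 0 := by
    intro v hv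
    have hsum' : ∑ j, inner ℝ (c j) (v - y) = 0 := by rw [← sum_inner, hsum, inner_zero_left]
    exact (Finset.sum_eq_zero_iff_of_nonpos fun j _ => hc j v hv).1 hsum' i (Finset.mem_univ i)
  have hspan : vectorSpan ℝ D ≤ (ℝ ∙ c i)ᗮ := by
    rw [vectorSpan_def, Submodule.span_le]
    rintro _ ⟨v, hv, v', hv', rfl⟩
    simp only [SetLike.mem_coe, Submodule.mem_orthogonal_singleton_iff_inner_right, vsub_eq_sub]
    rw [← sub_sub_sub_cancel_right v v' y, inner_sub_right, horth v hv, horth v' hv', sub_zero]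
  exact inner_self_eq_zero.1 (Submodule.mem_orthogonal_singleton_iff_inner_right.1 (hspan (hcD i)))

section Subdifferential

variable {m : ℕ} {f : Evec m → EReal}

lemma IsProperFn.mem_subdiff_iff (hf : IsProperFn f) {x u : Evec m} :
    u ∈ subdiff f x ↔
      f x ≠ ⊤ ∧ ∀ v, f v ≠ ⊤ → (f x).toReal + inner ℝ u (v - x) ≤ (f v).toReal := by
  obtain ⟨hbot, v₀, hv₀⟩ := hf
  constructor
  · intro hu
    have hx : f x ≠ ⊤ := fun hx => hv₀ (top_le_iff.1 (by simpa [hx] using hu v₀))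
    refine ⟨hx, fun v hv => ?_⟩
    have := hu v
    rwa [← EReal.coe_toReal hx (hbot x), ← EReal.coe_toReal hv (hbot v), ← EReal.coe_add,
      EReal.coe_le_coe_iff] at this
  · rintro ⟨hx, hle⟩ v
    by_cases hv : f v = ⊤
    · simp [hv]
    rw [← EReal.coe_toReal hx (hbot x), ← EReal.coe_toReal hv (hbot v), ← EReal.coe_add,
      EReal.coe_le_coe_iff]
    exact hle v hv

lemma mem_subdiff_of_inner_eq {x u u' : Evec m} (hu : u ∈ subdiff f x)
    (h : ∀ v, f v ≠ ⊤ → inner ℝ u (v - x) = inner ℝ u' (v - x)) : u' ∈ subdiff f x := by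
  intro v
  by_cases hv : f v = ⊤
  · simp [hv]
  rw [← h v hv]
  exact hu v

lemma IsProperFn.convex_subdiff (hf : IsProperFn f) {x : Evec m} : Convex ℝ (subdiff f x) := by
  intro u₁ hu₁ u₂ hu₂ a b ha hb hab
  rw [hf.mem_subdiff_iff] at hu₁ hu₂ ⊢
  refine ⟨hu₁.1, fun v hv => ?_⟩
  have h₁ := hu₁.2 v hv
  have h₂ := hu₂.2 v hv
  rw [inner_add_left, real_inner_smul_left, real_inner_smul_left]
  linear_combination a * h₁ + b * h₂ + ((f v).toReal - (f x).toReal) * hab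

lemma IsProperFn.average_mem_subdiff (hf : IsProperFn f) {ι : Type*} [Fintype ι] [Nonempty ι]
    {x : Evec m} {u : ι → Evec m} (hu : ∀ i, u i ∈ subdiff f x) :
    (Fintype.card ι : ℝ)⁻¹ • ∑ i, u i ∈ subdiff f x := by
  rw [Finset.smul_sum]
  refine hf.convex_subdiff.sum_mem (fun _ _ => by positivity) ?_ fun i _ => hu i
  simp [Finset.card_univ]

lemma IsProperFn.mem_subdiff_of_tendsto (hf : IsProperFn f) (hlsc : LowerSemicontinuous f)
    {z u : ℕ → Evec m} {y w : Evec m} (hz : Tendsto z atTop (𝓝 y))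
    (hu : ∀ k, u k ∈ subdiff f (z k)) (hw : Tendsto u atTop (𝓝 w)) : w ∈ subdiff f y := by
  have hbound : ∀ v, f v ≠ ⊤ → f y ≤ ((f v).toReal - inner ℝ w (v - y) : ℝ) := by
    intro v hv
    have hlim : Tendsto (fun k => (z k, (((f v).toReal - inner ℝ (u k) (v - z k) : ℝ) : EReal)))
        atTop (𝓝 (y, (((f v).toReal - inner ℝ w (v - y) : ℝ) : EReal))) :=
      hz.prodMk_nhds ((continuous_coe_real_ereal.tendsto _).comp
        (tendsto_const_nhds.sub (hw.inner (tendsto_const_nhds.sub hz))))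
    refine hlsc.isClosed_epigraph.mem_of_tendsto hlim (Eventually.of_forall fun k => ?_)
    obtain ⟨hzk, hle⟩ := hf.mem_subdiff_iff.1 (hu k)
    show f (z k) ≤ _
    rw [← EReal.coe_toReal hzk (hf.1 _), EReal.coe_le_coe_iff]
    linarith [hle v hv]
  obtain ⟨v₀, hv₀⟩ := hf.2
  have hy : f y ≠ ⊤ := ne_top_of_le_ne_top (EReal.coe_ne_top _) (hbound v₀ hv₀)
  refine hf.mem_subdiff_iff.2 ⟨hy, fun v hv => ?_⟩
  have := hbound v hv
  rw [← EReal.coe_toReal hy (hf.1 _), EReal.coe_le_coe_iff] at this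
  linarith

lemma IsProperFn.inner_sub_nonpos_of_tendsto_smul (hf : IsProperFn f)
    (hlsc : LowerSemicontinuous f) {z u : ℕ → Evec m} {t : ℕ → ℝ} {y c v : Evec m}
    (hz : Tendsto z atTop (𝓝 y)) (hu : ∀ k, u k ∈ subdiff f (z k)) (ht₀ : ∀ k, 0 ≤ t k)
    (ht : Tendsto t atTop (𝓝 0)) (hc : Tendsto (fun k => t k • u k) atTop (𝓝 c))
    (hv : f v ≠ ⊤) : inner ℝ c (v - y) ≤ 0 := by
  obtain ⟨b, -, hb⟩ := EReal.lt_iff_exists_real_btwn.1 (bot_lt_iff_ne_bot.2 (hf.1 y))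
  have hle : ∀ᶠ k in atTop, inner ℝ (t k • u k) (v - z k) ≤ t k * ((f v).toReal - b) := by
    filter_upwards [hz.eventually (hlsc y b hb)] with k hk
    obtain ⟨hzk, hsub⟩ := hf.mem_subdiff_iff.1 (hu k)
    rw [← EReal.coe_toReal hzk (hf.1 _)] at hk
    have hk' : b < (f (z k)).toReal := EReal.coe_lt_coe_iff.1 hk
    rw [real_inner_smul_left]
    exact mul_le_mul_of_nonneg_left (by linarith [hsub v hv]) (ht₀ k)
  simpa using le_of_tendsto_of_tendsto (hc.inner (tendsto_const_nhds.sub hz))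
    (ht.mul_const _) hle

variable {ι : Type*} [Fintype ι] {z u : ℕ → ι → Evec m} {y w : Evec m}

lemma IsProperFn.frequently_norm_le_of_tendsto_sum (hf : IsProperFn f)
    (hlsc : LowerSemicontinuous f) (hz : ∀ i, Tendsto (fun k => z k i) atTop (𝓝 y))
    (hu : ∀ k i, u k i ∈ subdiff f (z k i)) (hV : ∀ k i, u k i ∈ vectorSpan ℝ {v | f v ≠ ⊤})
    (hw : Tendsto (fun k => ∑ i, u k i) atTop (𝓝 w)) : ∃ B, ∃ᶠ k in atTop, ‖u k‖ ≤ B := by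
  by_contra! hB
  have hnorm : Tendsto (fun k => ‖u k‖) atTop atTop :=
    tendsto_atTop.2 fun B => (hB B).mono fun _ h => h.le
  obtain ⟨c, -, φ, hφ, hc⟩ := tendsto_subseq_of_bounded (x := fun k => ‖u k‖⁻¹ • u k)
      (Metric.isBounded_closedBall (x := 0) (r := 1)) fun k => by
    rw [mem_closedBall_zero_iff, norm_smul, norm_inv, norm_norm]
    exact inv_mul_le_one
  have ht : Tendsto (fun j => ‖u (φ j)‖⁻¹) atTop (𝓝 0) :=
    (hnorm.comp hφ.tendsto_atTop).inv_tendsto_atTop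
  have hc_norm : ‖c‖ = 1 := by
    refine tendsto_nhds_unique hc.norm (tendsto_const_nhds.congr' ?_)
    filter_upwards [(hnorm.comp hφ.tendsto_atTop).eventually_gt_atTop 0] with j hj
    exact (norm_smul_inv_norm (norm_pos_iff.1 hj)).symm
  have hci : ∀ i, Tendsto (fun j => ‖u (φ j)‖⁻¹ • u (φ j) i) atTop (𝓝 (c i)) :=
    fun i => ((continuous_apply i).tendsto c).comp hc
  have hc_sum : ∑ i, c i = 0 := by
    refine tendsto_nhds_unique (tendsto_finsetSum _ fun i _ => hci i) ?_
    simpa [← Finset.smul_sum] using ht.smul (hw.comp hφ.tendsto_atTop)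
  have hc_mem : ∀ i, c i ∈ vectorSpan ℝ {v | f v ≠ ⊤} := fun i =>
    (Submodule.closed_of_finiteDimensional _).mem_of_tendsto (hci i)
      (Eventually.of_forall fun j => Submodule.smul_mem _ _ (hV _ i))
  have hc_normal : ∀ i, ∀ v ∈ {v | f v ≠ ⊤}, inner ℝ (c i) (v - y) ≤ 0 := fun i _ hv =>
    hf.inner_sub_nonpos_of_tendsto_smul hlsc ((hz i).comp hφ.tendsto_atTop) (fun j => hu _ i)
      (fun _ => inv_nonneg.2 (norm_nonneg _)) ht (hci i) hv
  simp [eq_zero_of_sum_eq_zero_of_inner_sub_nonpos hc_mem hc_sum hc_normal] at hc_norm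

lemma IsProperFn.mem_subdiff_of_tendsto_average_of_mem_vectorSpan [Nonempty ι]
    (hf : IsProperFn f) (hlsc : LowerSemicontinuous f)
    (hz : ∀ i, Tendsto (fun k => z k i) atTop (𝓝 y)) (hu : ∀ k i, u k i ∈ subdiff f (z k i))
    (hV : ∀ k i, u k i ∈ vectorSpan ℝ {v | f v ≠ ⊤})
    (hw : Tendsto (fun k => (Fintype.card ι : ℝ)⁻¹ • ∑ i, u k i) atTop (𝓝 w)) :
    w ∈ subdiff f y := by
  have hsum : Tendsto (fun k => ∑ i, u k i) atTop (𝓝 ((Fintype.card ι : ℝ) • w)) := by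
    simpa [smul_smul] using hw.const_smul (Fintype.card ι : ℝ)
  obtain ⟨B, hB⟩ := hf.frequently_norm_le_of_tendsto_sum hlsc hz hu hV hsum
  obtain ⟨U, -, φ, hφ, hU⟩ := tendsto_subseq_of_frequently_bounded
    (Metric.isBounded_closedBall (x := 0) (r := B))
    (hB.mono fun _ hk => mem_closedBall_zero_iff.2 hk)
  have hUi : ∀ i, Tendsto (fun j => u (φ j) i) atTop (𝓝 (U i)) :=
    fun i => ((continuous_apply i).tendsto U).comp hU
  have hw_eq : w = (Fintype.card ι : ℝ)⁻¹ • ∑ i, U i :=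
    tendsto_nhds_unique (hw.comp hφ.tendsto_atTop)
      ((tendsto_finsetSum _ fun i _ => hUi i).const_smul _)
  rw [hw_eq]
  exact hf.average_mem_subdiff fun i =>
    hf.mem_subdiff_of_tendsto hlsc ((hz i).comp hφ.tendsto_atTop) (fun j => hu _ i) (hUi i)

lemma IsProperFn.mem_subdiff_of_tendsto_average [Nonempty ι]
    (hf : IsProperFn f) (hlsc : LowerSemicontinuous f)
    (hz : ∀ i, Tendsto (fun k => z k i) atTop (𝓝 y)) (hu : ∀ k i, u k i ∈ subdiff f (z k i))
    (hw : Tendsto (fun k => (Fintype.card ι : ℝ)⁻¹ • ∑ i, u k i) atTop (𝓝 w)) :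
    w ∈ subdiff f y := by
  set V := vectorSpan ℝ {v | f v ≠ ⊤}
  have hP : ∀ a, ∀ b ∈ V, inner ℝ (V.starProjection a) b = inner ℝ a b := fun a b hb => by
    rw [← sub_eq_zero, ← inner_sub_left, ← neg_sub, inner_neg_left,
      V.starProjection_inner_eq_zero a b hb, neg_zero]
  have hzV : ∀ k i, ∀ v, f v ≠ ⊤ → v - z k i ∈ V := fun k i v hv =>
    vsub_mem_vectorSpan ℝ hv (hf.mem_subdiff_iff.1 (hu k i)).1
  have hyV : ∀ v, f v ≠ ⊤ → v - y ∈ V := fun v hv =>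
    (Submodule.closed_of_finiteDimensional V).mem_of_tendsto
      (tendsto_const_nhds.sub (hz (Classical.arbitrary ι)))
      (Eventually.of_forall fun k => hzV k _ v hv)
  have hPw : V.starProjection w ∈ subdiff f y := by
    refine hf.mem_subdiff_of_tendsto_average_of_mem_vectorSpan hlsc hz
      (fun k i => mem_subdiff_of_inner_eq (hu k i) fun v hv => (hP _ _ (hzV k i v hv)).symm)
      (fun k i => V.starProjection_apply_mem _) ?_
    convert (V.starProjection.continuous.tendsto w).comp hw using 2 with k
    simp only [Function.comp_apply, map_smul, map_sum]
  exact mem_subdiff_of_inner_eq hPw fun v hv => hP _ _ (hyV v hv)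

end Subdifferential

section Conjugate

variable {m : ℕ} {g : Evec m → EReal}

lemma inner_sub_le_conjFn (g : Evec m → EReal) (v x : Evec m) :
    ((inner ℝ v x : ℝ) : EReal) - g x ≤ conjFn g v :=
  le_iSup (fun x => ((inner ℝ v x : ℝ) : EReal) - g x) x

lemma conjFn_le_of_affine_minorant {a : Evec m} {c : ℝ}
    (h : ∀ x, ((inner ℝ a x - c : ℝ) : EReal) ≤ g x) : conjFn g a ≤ c :=
  iSup_le fun x => by
    calc ((inner ℝ a x : ℝ) : EReal) - g x ≤ (inner ℝ a x : ℝ) - ((inner ℝ a x - c : ℝ) : EReal) :=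
          EReal.sub_le_sub le_rfl (h x)
      _ = c := by rw [← EReal.coe_sub, sub_sub_cancel]

lemma lowerSemicontinuous_conjFn (g : Evec m → EReal) : LowerSemicontinuous (conjFn g) := by
  refine lowerSemicontinuous_iSup fun x => ?_
  induction g x using EReal.rec with
  | bot => simpa [EReal.coe_sub_bot] using lowerSemicontinuous_const
  | top => simpa [EReal.sub_top] using lowerSemicontinuous_const
  | coe r =>
    simp_rw [← EReal.coe_sub]
    exact (continuous_coe_real_ereal.comp
      ((continuous_id.inner continuous_const).sub continuous_const)).lowerSemicontinuous

def epigraph (g : Evec m → EReal) : Set (Evec m × ℝ) := {p | g p.1 ≤ p.2}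

lemma isClosed_epigraph (hlsc : LowerSemicontinuous g) : IsClosed (epigraph g) :=
  hlsc.isClosed_epigraph.preimage
    (continuous_fst.prodMk (continuous_coe_real_ereal.comp continuous_snd))

lemma convex_epigraph (hconv : IsConvexFn g) : Convex ℝ (epigraph g) := by
  rintro ⟨x₁, t₁⟩ h₁ ⟨x₂, t₂⟩ h₂ a b ha hb hab
  calc g (a • x₁ + b • x₂) ≤ (a : EReal) * g x₁ + (b : EReal) * g x₂ := hconv x₁ x₂ a b ha hb hab
    _ ≤ (a : EReal) * t₁ + (b : EReal) * t₂ :=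
        add_le_add (mul_le_mul_of_nonneg_left h₁ (by exact_mod_cast ha))
          (mul_le_mul_of_nonneg_left h₂ (by exact_mod_cast hb))
    _ = ((a • t₁ + b • t₂ : ℝ) : EReal) := by simp [smul_eq_mul]

lemma exists_separation_of_lt_epigraph (hlsc : LowerSemicontinuous g) (hconv : IsConvexFn g)
    (hdom : ∃ x, g x ≠ ⊤) {x₀ : Evec m} {r : ℝ} (hr : (r : EReal) < g x₀) :
    ∃ (a : Evec m) (α β : ℝ), 0 ≤ α ∧ (∀ x (t : ℝ), g x ≤ t → β < inner ℝ a x + α * t) ∧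
      inner ℝ a x₀ + α * r < β := by
  obtain ⟨φ, β, hφ₀, hφ⟩ := geometric_hahn_banach_point_closed (convex_epigraph hconv)
    (isClosed_epigraph hlsc) (x := (x₀, r)) (not_le.2 hr)
  set a := (InnerProductSpace.toDual ℝ (Evec m)).symm (φ.comp (ContinuousLinearMap.inl ℝ _ ℝ))
  have hφ_apply : ∀ x t, φ (x, t) = inner ℝ a x + φ (0, 1) * t := fun x t => by
    rw [InnerProductSpace.toDual_symm_apply, ContinuousLinearMap.comp_apply,
      ContinuousLinearMap.inl_apply, mul_comm, ← smul_eq_mul, ← map_smul, ← map_add]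
    simp
  refine ⟨a, φ (0, 1), β, ?_, fun x t hxt => hφ_apply x t ▸ hφ (x, t) hxt, hφ_apply x₀ r ▸ hφ₀⟩
  by_contra! hα
  obtain ⟨x, hx⟩ := hdom
  obtain ⟨t, hβ, ht⟩ := ((tendsto_atBot_add_const_left _ (inner ℝ a x)
    (tendsto_id.const_mul_atTop_of_neg hα)).eventually (eventually_le_atBot β) |>.and
    (eventually_ge_atTop (g x).toReal)).exists
  have := hφ (x, t) ((EReal.le_coe_toReal hx).trans (by exact_mod_cast ht))
  rw [hφ_apply] at this
  exact (hβ.trans_lt this).false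

lemma exists_affine_minorant_of_separation {a x₀ : Evec m} {α β r : ℝ} (hα : 0 < α)
    (hsep : ∀ x (t : ℝ), g x ≤ t → β < inner ℝ a x + α * t) (hx₀ : inner ℝ a x₀ + α * r < β) :
    ∃ (a' : Evec m) (c : ℝ), (∀ x, ((inner ℝ a' x - c : ℝ) : EReal) ≤ g x) ∧
      r < inner ℝ a' x₀ - c := by
  have hval : ∀ x, inner ℝ (-α⁻¹ • a) x - -(β / α) = (β - inner ℝ a x) / α := fun x => by
    rw [real_inner_smul_left]
    field_simp
    ring
  refine ⟨-α⁻¹ • a, -(β / α), fun x => ?_, by rw [hval, lt_div_iff₀ hα]; linarith⟩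
  rw [hval]
  by_contra! hx
  obtain ⟨t, hxt, ht⟩ := EReal.lt_iff_exists_real_btwn.1 hx
  have := hsep x t hxt.le
  rw [EReal.coe_lt_coe_iff, lt_div_iff₀ hα] at ht
  linarith

lemma exists_affine_minorant (hg : InGamma g) :
    ∃ (a : Evec m) (c : ℝ), ∀ x, ((inner ℝ a x - c : ℝ) : EReal) ≤ g x := by
  obtain ⟨⟨hbot, x₀, hx₀⟩, hlsc, hconv⟩ := hg
  have hr : (((g x₀).toReal - 1 : ℝ) : EReal) < g x₀ :=
    calc (((g x₀).toReal - 1 : ℝ) : EReal) < (g x₀).toReal := by exact_mod_cast sub_one_lt _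
      _ = g x₀ := EReal.coe_toReal hx₀ (hbot x₀)
  obtain ⟨a, α, β, hα, hsep, hx⟩ := exists_separation_of_lt_epigraph hlsc hconv ⟨x₀, hx₀⟩ hr
  have hβ := hsep x₀ (g x₀).toReal (EReal.le_coe_toReal hx₀)
  have hα_pos : 0 < α := hα.lt_of_ne fun h => by subst h; linarith
  obtain ⟨a', c, hmin, -⟩ := exists_affine_minorant_of_separation hα_pos hsep hx
  exact ⟨a', c, hmin⟩

/-- When the separating hyperplane is vertical, tilting a fixed affine minorant by a large
multiple of it still gives a minorant, now exceeding `r` at `x₀`. -/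
lemma exists_affine_minorant_gt (hg : InGamma g) {x₀ : Evec m} {r : ℝ} (hr : (r : EReal) < g x₀) :
    ∃ (a : Evec m) (c : ℝ), (∀ x, ((inner ℝ a x - c : ℝ) : EReal) ≤ g x) ∧
      r < inner ℝ a x₀ - c := by
  obtain ⟨a, α, β, hα, hsep, hx₀⟩ := exists_separation_of_lt_epigraph hg.2.1 hg.2.2 hg.1.2 hr
  rcases hα.lt_or_eq with hα | rfl
  · exact exists_affine_minorant_of_separation hα hsep hx₀
  simp only [zero_mul, add_zero] at hsep hx₀
  obtain ⟨a₀, c₀, hmin⟩ := exists_affine_minorant hg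
  set κ := (|r - (inner ℝ a₀ x₀ - c₀)| + 1) / (β - inner ℝ a x₀)
  have hκ : κ * (β - inner ℝ a x₀) = |r - (inner ℝ a₀ x₀ - c₀)| + 1 :=
    div_mul_cancel₀ _ (sub_pos.2 hx₀).ne'
  have hκ_nonneg : 0 ≤ κ := div_nonneg (by positivity) (sub_pos.2 hx₀).le
  refine ⟨a₀ - κ • a, c₀ - κ * β, fun x => ?_, ?_⟩
  · by_cases hx : g x = ⊤
    · simp [hx]
    have hβx : β < inner ℝ a x := hsep x _ (EReal.le_coe_toReal hx)
    refine le_trans (EReal.coe_le_coe_iff.2 ?_) (hmin x)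
    rw [inner_sub_left, real_inner_smul_left]
    nlinarith
  · rw [inner_sub_left, real_inner_smul_left]
    linarith [le_abs_self (r - (inner ℝ a₀ x₀ - c₀))]

lemma le_conjFn_conjFn (hg : InGamma g) (x : Evec m) : g x ≤ conjFn (conjFn g) x := by
  by_contra! h
  obtain ⟨r, hr₁, hr₂⟩ := EReal.lt_iff_exists_real_btwn.1 h
  obtain ⟨a, c, hmin, hr⟩ := exists_affine_minorant_gt hg hr₂
  have hle : ((inner ℝ x a - c : ℝ) : EReal) ≤ conjFn (conjFn g) x :=
    calc ((inner ℝ x a - c : ℝ) : EReal) = (inner ℝ x a : ℝ) - (c : EReal) := EReal.coe_sub _ _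
      _ ≤ (inner ℝ x a : ℝ) - conjFn g a :=
          EReal.sub_le_sub le_rfl (conjFn_le_of_affine_minorant hmin)
      _ ≤ conjFn (conjFn g) x := inner_sub_le_conjFn _ x a
  rw [real_inner_comm] at hle
  exact hr.not_gt (EReal.coe_lt_coe_iff.1 (hle.trans_lt hr₁))

lemma isProperFn_conjFn (hg : InGamma g) : IsProperFn (conjFn g) := by
  obtain ⟨hbot, x₀, hx₀⟩ := hg.1
  refine ⟨fun v => ne_bot_of_le_ne_bot ?_ (inner_sub_le_conjFn g v x₀), ?_⟩
  · rw [← EReal.coe_toReal hx₀ (hbot x₀), ← EReal.coe_sub]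
    exact EReal.coe_ne_bot _
  · obtain ⟨a, c, hmin⟩ := exists_affine_minorant hg
    exact ⟨a, ne_top_of_le_ne_top (EReal.coe_ne_top c) (conjFn_le_of_affine_minorant hmin)⟩

lemma mem_subdiff_of_mem_subdiff_conjFn (hg : InGamma g) {y w : Evec m}
    (h : w ∈ subdiff (conjFn g) y) : y ∈ subdiff g w := by
  have hconj := isProperFn_conjFn hg
  obtain ⟨hy, hsub⟩ := hconj.mem_subdiff_iff.1 h
  have hw : g w ≤ ((inner ℝ y w - (conjFn g y).toReal : ℝ) : EReal) := by
    refine (le_conjFn_conjFn hg w).trans (iSup_le fun a => ?_)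
    by_cases ha : conjFn g a = ⊤
    · simp [ha]
    rw [← EReal.coe_toReal ha (hconj.1 a), ← EReal.coe_sub, EReal.coe_le_coe_iff]
    have := hsub a ha
    rw [inner_sub_right] at this
    linarith [real_inner_comm w y]
  have hgw : g w ≠ ⊤ := ne_top_of_le_ne_top (EReal.coe_ne_top _) hw
  refine hg.1.mem_subdiff_iff.2 ⟨hgw, fun x hx => ?_⟩
  have hx' := inner_sub_le_conjFn g y x
  rw [← EReal.coe_toReal hx (hg.1.1 x), ← EReal.coe_toReal hy (hconj.1 y), ← EReal.coe_sub,
    EReal.coe_le_coe_iff] at hx'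
  rw [← EReal.coe_toReal hgw (hg.1.1 w), EReal.coe_le_coe_iff] at hw
  rw [inner_sub_right]
  linarith

end Conjugate

theorem limiting_subgradient_general {N m : ℕ} (hN : 0 < N) (σ : ℝ)
    (g : Evec m → EReal) (hg : InGamma g)
    (y z : ℕ → Fin N → Evec m) (ystar wstar : Evec m)
    (hy : ∀ i, Filter.Tendsto (fun k => y k i) Filter.atTop (nhds ystar))
    (hz : ∀ i, Filter.Tendsto (fun k => z k i) Filter.atTop (nhds ystar))
    (w : ℕ → Evec m)
    (hwlim : Filter.Tendsto w Filter.atTop (nhds wstar))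
    (hincl : ∀ k, ∃ u : Fin N → Evec m,
      (∀ i, u i ∈ subdiff (conjFn g) (z (k + 1) i)) ∧
      w (k + 1) - (σ / N) • ∑ i, (z (k + 1) i - y (k + 1) i)
        = (1 / (N : ℝ)) • ∑ i, u i) :
    ystar ∈ subdiff g wstar := by
  have : Nonempty (Fin N) := Fin.pos_iff_nonempty.1 hN
  choose u hu hu_avg using hincl
  have hshift : Tendsto (fun k => k + 1) atTop atTop := tendsto_add_atTop_nat 1
  have hresidual : Tendsto (fun k => ∑ i, (z (k + 1) i - y (k + 1) i)) atTop (𝓝 0) := by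
    simpa using tendsto_finsetSum Finset.univ fun i _ => ((hz i).sub (hy i)).comp hshift
  have havg : Tendsto (fun k => (Fintype.card (Fin N) : ℝ)⁻¹ • ∑ i, u k i) atTop (𝓝 wstar) := by
    simp_rw [Fintype.card_fin, ← one_div, ← hu_avg]
    simpa using (hwlim.comp hshift).sub (hresidual.const_smul (σ / N))
  have hconj : wstar ∈ subdiff (conjFn g) ystar :=
    (isProperFn_conjFn hg).mem_subdiff_of_tendsto_average (lowerSemicontinuous_conjFn g)
      (fun i => (hz i).comp hshift) hu havg
  exact mem_subdiff_of_mem_subdiff_conjFn hg hconj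

/-- the limiting argument establishing `y* ∈ ∂g(w*)` from the
per-iteration inclusion in averaged subdifferentials of `g*`. -/
theorem limiting_subgradient {N m : ℕ} (hN : 0 < N) (σ : ℝ) (hσ : 0 < σ)
    (g : Evec m → EReal) (hg : InGamma g)
    (y z s : ℕ → Fin N → Evec m) (ystar wstar : Evec m)
    (hy : ∀ i, Filter.Tendsto (fun k => y k i) Filter.atTop (nhds ystar))
    (hz : ∀ i, Filter.Tendsto (fun k => z k i) Filter.atTop (nhds ystar))
    (hs : ∀ k i, s (k + 1) i = s k i + σ • (y k i - z k i))
    (w : ℕ → Evec m) (hw : ∀ k, w k = ∑ i, s k i)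
    (hwlim : Filter.Tendsto w Filter.atTop (nhds wstar))
    (hincl : ∀ k, ∃ u : Fin N → Evec m,
      (∀ i, u i ∈ subdiff (conjFn g) (z (k + 1) i)) ∧
      w (k + 1) - (σ / N) • ∑ i, (z (k + 1) i - y (k + 1) i)
        = (1 / (N : ℝ)) • ∑ i, u i) :
    ystar ∈ subdiff g wstar :=
  limiting_subgradient_general hN σ g hg y z ystar wstar hy hz w hwlim hincl
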